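/- Let d ≥ 2, let S ⊆ ℤ^d be an odd set, and let {u,v} be an edge of ∂S. Then for any unit vector e ∈ ℤ^d (i.e., e = ±e_i for a standard basis vector e_i), either the edge {u, u+e} or the edge {v, v+e} belongs to ∂S. In particular, |∂u ∩ ∂S| + |∂v ∩ ∂S| ≥ 2d, where ∂w denotes the set of 2d edges of ℤ^d incident to the vertex w. -/

import Mathlib

/-- The nearest-neighbor lattice graph on `ℤ^d`: two vertices are adjacent
iff they differ by one in exactly one coordinate (equivalently, ℓ¹-distance 1). -/
def ZGraph (d : ℕ) : SimpleGraph (Fin d → ℤ) where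
  Adj u v := ∑ i, (u i - v i).natAbs = 1
  symm := by
    constructor
    intro u v h
    have e : ∀ i, (v i - u i).natAbs = (u i - v i).natAbs := fun i => by
      rw [← Int.natAbs_neg, neg_sub]
    simpa only [e] using h
  loopless := by
    constructor
    intro u h
    simp at h

/-- A vertex is odd if its coordinate sum is odd. -/
def OddVert {d : ℕ} (v : Fin d → ℤ) : Prop := Odd (∑ i, v i)

/-- A vertex is even if its coordinate sum is even. -/
def EvenVert {d : ℕ} (v : Fin d → ℤ) : Prop := Even (∑ i, v i)

/-- Internal vertex-boundary of `U`. -/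
def intBdry (d : ℕ) (U : Set (Fin d → ℤ)) : Set (Fin d → ℤ) :=
  {u ∈ U | ∃ v, (ZGraph d).Adj u v ∧ v ∉ U}

/-- External vertex-boundary of `U`. -/
def extBdry (d : ℕ) (U : Set (Fin d → ℤ)) : Set (Fin d → ℤ) :=
  {v | v ∉ U ∧ ∃ u ∈ U, (ZGraph d).Adj u v}

/-- A set is odd if its internal vertex-boundary consists of odd vertices. -/
def IsOddSet (d : ℕ) (U : Set (Fin d → ℤ)) : Prop := ∀ u ∈ intBdry d U, OddVert u

/-- A set is even if its internal vertex-boundary consists of even vertices. -/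
def IsEvenSet (d : ℕ) (U : Set (Fin d → ℤ)) : Prop := ∀ u ∈ intBdry d U, EvenVert u

/-- The edge-boundary of `U`: edges with exactly one endpoint in `U`. -/
def edgeBdry (d : ℕ) (U : Set (Fin d → ℤ)) : Set (Sym2 (Fin d → ℤ)) :=
  {e | ∃ u v, (ZGraph d).Adj u v ∧ u ∈ U ∧ v ∉ U ∧ e = s(u, v)}

/-- A cutset: a non-empty finite subset of `ℤ^d` which is connected and co-connected. -/
def IsCutset (d : ℕ) (U : Set (Fin d → ℤ)) : Prop :=
  U.Finite ∧ U.Nonempty ∧ ((ZGraph d).induce U).Connected ∧ ((ZGraph d).induce Uᶜ).Connected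

/-- `OCC d n`: the number of odd cutsets in `ℤ^d` containing the origin with `n` boundary edges. -/
noncomputable def OCC (d n : ℕ) : ℕ :=
  {S : Set (Fin d → ℤ) | IsCutset d S ∧ IsOddSet d S ∧ (0 : Fin d → ℤ) ∈ S ∧
    (edgeBdry d S).ncard = n}.ncard

/-- A set is regular if both it and its complement have no isolated vertices. -/
def IsRegularSet (d : ℕ) (U : Set (Fin d → ℤ)) : Prop :=
  (∀ u ∈ U, ∃ v ∈ U, (ZGraph d).Adj u v) ∧ (∀ u ∉ U, ∃ v ∉ U, (ZGraph d).Adj u v)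

/-- The graph `(ℤ^d)^{⊗r}` where two vertices are adjacent iff their lattice distance is ≤ r. -/
def PowGraph (d r : ℕ) : SimpleGraph (Fin d → ℤ) where
  Adj u v := u ≠ v ∧ (ZGraph d).dist u v ≤ r
  symm := by
    constructor
    rintro u v ⟨h1, h2⟩
    exact ⟨h1.symm, by rwa [SimpleGraph.dist_comm]⟩
  loopless := by constructor; rintro u ⟨h, -⟩; exact h rfl

/-- An `r`-cutset: a finite regular set, connected and co-connected in `(ℤ^d)^{⊗r}`. -/
def IsRCutset (d r : ℕ) (U : Set (Fin d → ℤ)) : Prop :=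
  U.Finite ∧ IsRegularSet d U ∧
    ((PowGraph d r).induce U).Connected ∧ ((PowGraph d r).induce Uᶜ).Connected

/-- An approximation: a pair of disjoint subsets of `ℤ^d`, the first odd, the second even. -/
structure Approx (d : ℕ) where
  inn : Set (Fin d → ℤ)
  out : Set (Fin d → ℤ)
  disj : Disjoint inn out
  inn_odd : IsOddSet d inn
  out_even : IsEvenSet d out

/-- The set of unknown vertices of an approximation. -/
def Approx.star {d : ℕ} (A : Approx d) : Set (Fin d → ℤ) := (A.inn ∪ A.out)ᶜ

/-- `A` approximates `S` if `A.inn ⊆ S` and `A.out ⊆ Sᶜ`. -/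
def Approximates {d : ℕ} (A : Approx d) (S : Set (Fin d → ℤ)) : Prop :=
  A.inn ⊆ S ∧ A.out ⊆ Sᶜ

/-- A `t`-approximation: the subgraph induced on the unknown vertices has
maximum degree at most `t` and no isolated vertices. -/
def IsTApprox (d t : ℕ) (A : Approx d) : Prop :=
  (∀ v ∈ A.star, ({u ∈ A.star | (ZGraph d).Adj v u}).ncard ≤ t) ∧
  (∀ v ∈ A.star, ∃ u ∈ A.star, (ZGraph d).Adj v u)

/-- The neighborhood `N(U)` of a set. -/
def nbrSet (d : ℕ) (U : Set (Fin d → ℤ)) : Set (Fin d → ℤ) :=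
  {v | ∃ u ∈ U, (ZGraph d).Adj v u}

/-- `U⁺ = U ∪ N(U)`. -/
def plus (d : ℕ) (U : Set (Fin d → ℤ)) : Set (Fin d → ℤ) := U ∪ nbrSet d U

/-- `W` separates `S` if every boundary edge of `S` has an endpoint in `W`. -/
def Separates (d : ℕ) (W S : Set (Fin d → ℤ)) : Prop :=
  ∀ a b : Fin d → ℤ, s(a, b) ∈ edgeBdry d S → a ∈ W ∨ b ∈ W


/-!
If `u ∈ S`, `v ∉ S`, `u + e ∈ S` and `v + e ∉ S`, then `u` and `u + e` both lie on the internal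
vertex-boundary of `S`, so for an odd set both are odd; but they are adjacent, and adjacent
vertices of `ℤ^d` have opposite parity. Hence `{u, u + e}` or `{v, v + e}` crosses the boundary.
Since `e ↦ {w, w + e}` is a bijection from the `2d` unit vectors onto the edges at `w`, every unit
vector contributes a boundary edge at `u` or at `v`, which gives the count.
-/

namespace ZGraph

def unitVectors (d : ℕ) : Set (Fin d → ℤ) := {e | ∑ i, (e i).natAbs = 1}

variable {d : ℕ}

lemma adj_iff_sub_mem_unitVectors {u v : Fin d → ℤ} :
    (ZGraph d).Adj u v ↔ v - u ∈ unitVectors d := by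
  change ∑ i, (u i - v i).natAbs = 1 ↔ ∑ i, (v i - u i).natAbs = 1
  simp only [← Int.natAbs_neg (u _ - v _), neg_sub]

lemma adj_add_iff {u e : Fin d → ℤ} : (ZGraph d).Adj u (u + e) ↔ e ∈ unitVectors d := by
  rw [adj_iff_sub_mem_unitVectors, add_sub_cancel_left]

lemma adj_add_add_iff {u v e : Fin d → ℤ} :
    (ZGraph d).Adj (u + e) (v + e) ↔ (ZGraph d).Adj u v := by
  rw [adj_iff_sub_mem_unitVectors, adj_iff_sub_mem_unitVectors, add_sub_add_right_eq_sub]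

lemma odd_sum_of_mem_unitVectors {e : Fin d → ℤ} (he : e ∈ unitVectors d) : Odd (∑ i, e i) := by
  have h : Even (∑ i, e i - ((∑ i, (e i).natAbs : ℕ) : ℤ)) := by
    push_cast
    rw [← Finset.sum_sub_distrib]
    exact Finset.even_sum _ fun i _ => Int.even_sub.2 even_abs.symm
  rw [show ∑ i, (e i).natAbs = 1 from he] at h
  simpa using Int.even_sub'.1 h

lemma oddVert_add_iff {u e : Fin d → ℤ} (he : e ∈ unitVectors d) :
    OddVert (u + e) ↔ ¬ OddVert u := by
  have := odd_sum_of_mem_unitVectors he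
  unfold OddVert
  simp only [Pi.add_apply, Finset.sum_add_distrib, Int.odd_add, ← Int.not_odd_iff_even]
  tauto

lemma unitVectors_finite : (unitVectors d).Finite := by
  refine (Set.Finite.pi fun _ => Set.finite_Icc (-1 : ℤ) 1).subset fun e he i _ => ?_
  have : (e i).natAbs ≤ 1 :=
    he ▸ Finset.single_le_sum (f := fun j => (e j).natAbs) (fun _ _ => Nat.zero_le _)
      (Finset.mem_univ i)
  simp only [Set.mem_Icc]
  omega

lemma two_mul_le_ncard_unitVectors : 2 * d ≤ (unitVectors d).ncard := by
  set f : Fin d × ℤˣ → (Fin d → ℤ) := fun p => Pi.single p.1 (p.2 : ℤ)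
  have hf : Function.Injective f := by
    rintro ⟨i, a⟩ ⟨j, b⟩ h
    obtain rfl : i = j := by
      by_contra hij
      simpa [f, hij] using congrFun h i
    simpa [f, Units.ext_iff] using h
  have hrange : Set.range f ⊆ unitVectors d := by
    rintro _ ⟨⟨i, a⟩, rfl⟩
    simp [f, unitVectors, Pi.single_apply, apply_ite Int.natAbs]
  calc 2 * d = Nat.card (Fin d × ℤˣ) := by simp [Fintype.card_units_int, mul_comm]
    _ = (Set.range f).ncard := (Set.ncard_range_of_injective hf).symm
    _ ≤ (unitVectors d).ncard := Set.ncard_le_ncard hrange unitVectors_finite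

lemma ncard_incidenceSet_inter (w : Fin d → ℤ) (T : Set (Sym2 (Fin d → ℤ))) :
    ((ZGraph d).incidenceSet w ∩ T).ncard = {e ∈ unitVectors d | s(w, w + e) ∈ T}.ncard := by
  have himage : (ZGraph d).incidenceSet w ∩ T =
      (fun e => s(w, w + e)) '' {e ∈ unitVectors d | s(w, w + e) ∈ T} := by
    ext x
    constructor
    · rintro ⟨⟨hx, hwx⟩, hT⟩
      obtain ⟨y, rfl⟩ := Sym2.mem_iff_exists.1 hwx
      refine ⟨y - w, ⟨adj_iff_sub_mem_unitVectors.1 hx, ?_⟩, ?_⟩ <;> simp [hT]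
    · rintro ⟨e, ⟨he, hT⟩, rfl⟩
      exact ⟨(ZGraph d).mk'_mem_incidenceSet_left_iff.2 (adj_add_iff.2 he), hT⟩
  rw [himage, Set.ncard_image_of_injective _ fun e e' h => add_left_cancel (Sym2.congr_right.1 h)]

end ZGraph

open ZGraph

variable {d : ℕ} {S : Set (Fin d → ℤ)} {u v e : Fin d → ℤ}

lemma IsOddSet.mem_edgeBdry_add_or_of_mem_of_notMem (hS : IsOddSet d S)
    (huv : (ZGraph d).Adj u v) (hu : u ∈ S) (hv : v ∉ S) (he : e ∈ unitVectors d) :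
    s(u, u + e) ∈ edgeBdry d S ∨ s(v, v + e) ∈ edgeBdry d S := by
  by_cases hue : u + e ∈ S
  · by_cases hve : v + e ∈ S
    · exact Or.inr ⟨v + e, v, (adj_add_iff.2 he).symm, hve, hv, Sym2.eq_swap⟩
    · have hu_odd : OddVert u := hS u ⟨hu, v, huv, hv⟩
      have hue_odd : OddVert (u + e) := hS (u + e) ⟨hue, v + e, adj_add_add_iff.2 huv, hve⟩
      exact absurd hu_odd ((oddVert_add_iff he).1 hue_odd)
  · exact Or.inl ⟨u, u + e, adj_add_iff.2 he, hu, hue, rfl⟩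

lemma IsOddSet.mem_edgeBdry_add_or (hS : IsOddSet d S) (huv : s(u, v) ∈ edgeBdry d S)
    (he : e ∈ unitVectors d) : s(u, u + e) ∈ edgeBdry d S ∨ s(v, v + e) ∈ edgeBdry d S := by
  obtain ⟨a, b, hab, ha, hb, heq⟩ := huv
  rcases Sym2.eq_iff.1 heq with ⟨rfl, rfl⟩ | ⟨rfl, rfl⟩
  · exact hS.mem_edgeBdry_add_or_of_mem_of_notMem hab ha hb he
  · exact (hS.mem_edgeBdry_add_or_of_mem_of_notMem hab ha hb he).symm

lemma IsOddSet.two_mul_le_ncard_incidenceSet_inter_edgeBdry (hS : IsOddSet d S)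
    (huv : s(u, v) ∈ edgeBdry d S) :
    2 * d ≤ ((ZGraph d).incidenceSet u ∩ edgeBdry d S).ncard +
      ((ZGraph d).incidenceSet v ∩ edgeBdry d S).ncard := by
  rw [ncard_incidenceSet_inter, ncard_incidenceSet_inter]
  calc 2 * d ≤ (unitVectors d).ncard := two_mul_le_ncard_unitVectors
    _ ≤ ({e ∈ unitVectors d | s(u, u + e) ∈ edgeBdry d S} ∪
          {e ∈ unitVectors d | s(v, v + e) ∈ edgeBdry d S}).ncard :=
      Set.ncard_le_ncard (fun e he => (hS.mem_edgeBdry_add_or huv he).imp (⟨he, ·⟩) (⟨he, ·⟩))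
        (unitVectors_finite.subset (Set.union_subset (Set.sep_subset _ _) (Set.sep_subset _ _)))
    _ ≤ _ := Set.ncard_union_le _ _

theorem odd_set_four_cycle_property_general (d : ℕ) (S : Set (Fin d → ℤ))
    (hS : IsOddSet d S) (u v : Fin d → ℤ) (huv : s(u, v) ∈ edgeBdry d S)
    (e : Fin d → ℤ) (he : ∑ i, (e i).natAbs = 1) :
    (s(u, u + e) ∈ edgeBdry d S ∨ s(v, v + e) ∈ edgeBdry d S) ∧
    2 * d ≤ ((ZGraph d).incidenceSet u ∩ edgeBdry d S).ncard +
      ((ZGraph d).incidenceSet v ∩ edgeBdry d S).ncard :=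
  ⟨hS.mem_edgeBdry_add_or huv he, hS.two_mul_le_ncard_incidenceSet_inter_edgeBdry huv⟩

/-- For an odd set `S` and a boundary edge `{u, v} ∈ ∂S`, for any unit vector `e` either
`{u, u+e}` or `{v, v+e}` belongs to `∂S`; in particular
`|∂u ∩ ∂S| + |∂v ∩ ∂S| ≥ 2d`. -/
theorem odd_set_four_cycle_property (d : ℕ) (hd : 2 ≤ d) (S : Set (Fin d → ℤ))
    (hS : IsOddSet d S) (u v : Fin d → ℤ) (huv : s(u, v) ∈ edgeBdry d S)
    (e : Fin d → ℤ) (he : ∑ i, (e i).natAbs = 1) :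
    (s(u, u + e) ∈ edgeBdry d S ∨ s(v, v + e) ∈ edgeBdry d S) ∧
    2 * d ≤ ((ZGraph d).incidenceSet u ∩ edgeBdry d S).ncard +
      ((ZGraph d).incidenceSet v ∩ edgeBdry d S).ncard :=
  odd_set_four_cycle_property_general d S hS u v huv e he
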